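/- Every mutation-cyclic triple reaches a root by iterated mutation at the vertex opposite the maximal entry: if (a,b,c) with 2 ≤ a ≤ b ≤ c is mutation-cyclic, then the sequence of triples obtained by repeatedly replacing the maximal entry c' of the current ordered triple (a',b',c') with a'b' − c' (and reordering) eventually reaches a triple (x,y,z) with x ≤ y ≤ z and xy ≥ 2z, and this procedure terminates in finitely many steps. -/

import Mathlib

/-- One mutation step on a triple of integers: replace one entry `x` by
(product of the other two) − `x`. -/
def mutStep (t s : ℤ × ℤ × ℤ) : Prop :=
  s = (t.1, t.2.1, t.1 * t.2.1 - t.2.2) ∨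
  s = (t.1, t.1 * t.2.2 - t.2.1, t.2.2) ∨
  s = (t.2.1 * t.2.2 - t.1, t.2.1, t.2.2)

/-- A triple is mutation-acyclic if some finite sequence of mutations
reaches a triple with a nonpositive entry (an acyclic quiver). -/
def MutationAcyclic (t : ℤ × ℤ × ℤ) : Prop :=
  ∃ s, Relation.ReflTransGen mutStep t s ∧ (s.1 ≤ 0 ∨ s.2.1 ≤ 0 ∨ s.2.2 ≤ 0)

/-- A triple is mutation-cyclic if every quiver in its mutation class is cyclic. -/
def MutationCyclic (t : ℤ × ℤ × ℤ) : Prop := ¬ MutationAcyclic t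

/-- Mutation of an ordered triple at the vertex opposite the maximal entry,
reordering the result increasingly. -/
def muMax (t : ℤ × ℤ × ℤ) : ℤ × ℤ × ℤ :=
  let d := t.1 * t.2.1 - t.2.2
  if d ≤ t.1 then (d, t.1, t.2.1)
  else if d ≤ t.2.1 then (t.1, d, t.2.1)
  else (t.1, t.2.1, d)

/-!
Mutation at the largest entry of a sorted triple `(a, b, c)` replaces `c` by `d = ab - c`, and
`d < c` exactly when the triple is not a root. Mutation-cyclicity is invariant under mutation and
under permuting the entries, and forces all entries to be positive. Hence along the `muMax`-orbit
of a sorted mutation-cyclic triple the entry sum is a positive integer that strictly decreases until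
a root is reached.
-/

/-- The root condition `x ≤ y ≤ z`, `xy ≥ 2z`; the bound `2 ≤ x` of the paper is automatic for
triples with positive entries. -/
def IsRoot (t : ℤ × ℤ × ℤ) : Prop :=
  t.1 ≤ t.2.1 ∧ t.2.1 ≤ t.2.2 ∧ t.1 * t.2.1 ≥ 2 * t.2.2

def swap12 (t : ℤ × ℤ × ℤ) : ℤ × ℤ × ℤ := (t.2.1, t.1, t.2.2)

def swap23 (t : ℤ × ℤ × ℤ) : ℤ × ℤ × ℤ := (t.1, t.2.2, t.2.1)

section Mutation

variable {t s : ℤ × ℤ × ℤ}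

theorem mutStep.swap12 (h : mutStep t s) : mutStep (swap12 t) (swap12 s) := by
  obtain ⟨t₁, t₂, t₃⟩ := t
  rcases h with rfl | rfl | rfl
  · exact Or.inl (by simp only [swap12, mul_comm])
  · exact Or.inr (Or.inr rfl)
  · exact Or.inr (Or.inl rfl)

theorem mutStep.swap23 (h : mutStep t s) : mutStep (swap23 t) (swap23 s) := by
  obtain ⟨t₁, t₂, t₃⟩ := t
  rcases h with rfl | rfl | rfl
  · exact Or.inr (Or.inl rfl)
  · exact Or.inl rfl
  · exact Or.inr (Or.inr (by simp only [swap23, mul_comm]))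

theorem MutationAcyclic.swap12 (h : MutationAcyclic t) : MutationAcyclic (swap12 t) := by
  obtain ⟨s, hts, hs⟩ := h
  refine ⟨_root_.swap12 s, hts.lift _root_.swap12 fun _ _ ↦ mutStep.swap12, ?_⟩
  simp only [_root_.swap12]
  tauto

theorem MutationAcyclic.swap23 (h : MutationAcyclic t) : MutationAcyclic (swap23 t) := by
  obtain ⟨s, hts, hs⟩ := h
  refine ⟨_root_.swap23 s, hts.lift _root_.swap23 fun _ _ ↦ mutStep.swap23, ?_⟩
  simp only [_root_.swap23]
  tauto

theorem MutationAcyclic.of_mutStep (hts : mutStep t s) (h : MutationAcyclic s) :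
    MutationAcyclic t := by
  obtain ⟨u, hsu, hu⟩ := h
  exact ⟨u, .head hts hsu, hu⟩

theorem MutationCyclic.pos (h : MutationCyclic t) : 0 < t.1 ∧ 0 < t.2.1 ∧ 0 < t.2.2 := by
  by_contra hle
  exact h ⟨t, .refl, by omega⟩

theorem MutationCyclic.muMax (h : MutationCyclic t) : MutationCyclic (muMax t) := by
  have hc : MutationCyclic (t.1, t.2.1, t.1 * t.2.1 - t.2.2) :=
    fun h' ↦ h (h'.of_mutStep (Or.inl rfl))
  have hb : MutationCyclic (t.1, t.1 * t.2.1 - t.2.2, t.2.1) := fun h' ↦ hc h'.swap23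
  have ha : MutationCyclic (t.1 * t.2.1 - t.2.2, t.1, t.2.1) := fun h' ↦ hb h'.swap12
  simp only [_root_.muMax]
  split_ifs <;> assumption

end Mutation

section MuMax

variable {t : ℤ × ℤ × ℤ}

theorem muMax_sorted (h : t.1 ≤ t.2.1) :
    (muMax t).1 ≤ (muMax t).2.1 ∧ (muMax t).2.1 ≤ (muMax t).2.2 := by
  simp only [muMax]
  split_ifs <;> dsimp only <;> omega

theorem muMax_sum :
    (muMax t).1 + (muMax t).2.1 + (muMax t).2.2 = t.1 + t.2.1 + (t.1 * t.2.1 - t.2.2) := by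
  simp only [muMax]
  split_ifs <;> dsimp only <;> ring

theorem muMax_sum_lt (h : t.1 ≤ t.2.1 ∧ t.2.1 ≤ t.2.2) (hroot : ¬IsRoot t) :
    (muMax t).1 + (muMax t).2.1 + (muMax t).2.2 < t.1 + t.2.1 + t.2.2 := by
  have hlt : t.1 * t.2.1 < 2 * t.2.2 := by
    by_contra hge
    exact hroot ⟨h.1, h.2, by omega⟩
  rw [muMax_sum]
  omega

end MuMax

theorem exists_iterate_muMax_isRoot (t : ℤ × ℤ × ℤ) (h : t.1 ≤ t.2.1 ∧ t.2.1 ≤ t.2.2)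
    (hcyc : MutationCyclic t) : ∃ n : ℕ, IsRoot (muMax^[n] t) := by
  by_cases hroot : IsRoot t
  · exact ⟨0, hroot⟩
  have hdec := muMax_sum_lt h hroot
  obtain ⟨n, hn⟩ := exists_iterate_muMax_isRoot (muMax t) (muMax_sorted h.1) hcyc.muMax
  exact ⟨n + 1, by rwa [Function.iterate_succ_apply]⟩
termination_by (t.1 + t.2.1 + t.2.2).toNat
decreasing_by have := hcyc.pos; omega

theorem stmt_17_general (a b c : ℤ) (hab : a ≤ b) (hbc : b ≤ c)
    (hcyc : MutationCyclic (a, b, c)) :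
    ∃ n : ℕ, (muMax^[n] (a, b, c)).1 ≤ (muMax^[n] (a, b, c)).2.1 ∧
      (muMax^[n] (a, b, c)).2.1 ≤ (muMax^[n] (a, b, c)).2.2 ∧
      (muMax^[n] (a, b, c)).1 * (muMax^[n] (a, b, c)).2.1 ≥
        2 * (muMax^[n] (a, b, c)).2.2 :=
  exists_iterate_muMax_isRoot (a, b, c) ⟨hab, hbc⟩ hcyc

theorem stmt_17 (a b c : ℤ) (ha : 2 ≤ a) (hab : a ≤ b) (hbc : b ≤ c)
    (hcyc : MutationCyclic (a, b, c)) :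
    ∃ n : ℕ, (muMax^[n] (a, b, c)).1 ≤ (muMax^[n] (a, b, c)).2.1 ∧
      (muMax^[n] (a, b, c)).2.1 ≤ (muMax^[n] (a, b, c)).2.2 ∧
      (muMax^[n] (a, b, c)).1 * (muMax^[n] (a, b, c)).2.1 ≥
        2 * (muMax^[n] (a, b, c)).2.2 :=
  stmt_17_general a b c hab hbc hcyc
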